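/- arXiv:2508.08921 — 2 statements merged into one kernel-verified Lean document; each statement's English description precedes it below -/
import Mathlib

section
/- Given a strictly block upper triangular N with block sizes ℓ₁ ≥ ⋯ ≥ ℓ_μ whose superdiagonal blocks have the form N_{i,i+1} = [R_{i+1,i+1}; 0] with R_{i+1,i+1} invertible, the matrix R^c := N (N^(E_c))^T + (I − N^(E_c)(N^(E_c))^T) is block upper triangular, invertible, and satisfies R^c N^(E_c) = N. -/
open Matrix

/-- The elementary nilpotent matrix `N^(E_c)`. -/
def Nec {μ : ℕ} (ℓ : Fin μ → ℕ) :
    Matrix ((i : Fin μ) × Fin (ℓ i)) ((i : Fin μ) × Fin (ℓ i)) ℝ :=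
  fun p q => if p.1.val + 1 = q.1.val ∧ p.2.val = q.2.val then 1 else 0

lemma sig_ext {μ : ℕ} {ℓ : Fin μ → ℕ} {p q : (i : Fin μ) × Fin (ℓ i)}
    (h1 : p.1.val = q.1.val) (h2 : p.2.val = q.2.val) : p = q := by
  obtain ⟨i, x⟩ := p
  obtain ⟨j, y⟩ := q
  simp only at h1 h2
  have : i = j := Fin.ext h1
  subst this
  exact Sigma.ext rfl (heq_of_eq (Fin.ext h2))

lemma sig_snd_val {μ : ℕ} {ℓ : Fin μ → ℕ} {p q : (i : Fin μ) × Fin (ℓ i)}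
    (h : p = q) : p.2.val = q.2.val := by subst h; rfl

lemma mul_necT {μ : ℕ} {ℓ : Fin μ → ℕ}
    (M : Matrix ((i : Fin μ) × Fin (ℓ i)) ((i : Fin μ) × Fin (ℓ i)) ℝ)
    (p q : (i : Fin μ) × Fin (ℓ i)) :
    (M * (Nec ℓ)ᵀ) p q =
      if h : q.1.val + 1 < μ then
        if h2 : q.2.val < ℓ ⟨q.1.val + 1, h⟩ then
          M p ⟨⟨q.1.val + 1, h⟩, ⟨q.2.val, h2⟩⟩ else 0
      else 0 := by
  rw [Matrix.mul_apply]
  split_ifs with h h2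
  · rw [Finset.sum_eq_single (⟨⟨q.1.val + 1, h⟩, ⟨q.2.val, h2⟩⟩ : (i : Fin μ) × Fin (ℓ i))]
    · simp [Nec]
    · intro r _ hr
      simp only [Matrix.transpose_apply, Nec]
      rw [if_neg, mul_zero]
      rintro ⟨h1', h2'⟩
      exact hr (sig_ext h1'.symm h2'.symm)
    · simp
  · refine Finset.sum_eq_zero fun r _ => ?_
    simp only [Matrix.transpose_apply, Nec]
    rw [if_neg, mul_zero]
    rintro ⟨h1', h2'⟩
    apply h2
    have : ℓ r.1 = ℓ ⟨q.1.val + 1, h⟩ := congrArg ℓ (Fin.ext h1'.symm)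
    rw [h2']
    exact this ▸ r.2.isLt
  · refine Finset.sum_eq_zero fun r _ => ?_
    simp only [Matrix.transpose_apply, Nec]
    rw [if_neg, mul_zero]
    rintro ⟨h1', -⟩
    exact h (h1' ▸ r.1.isLt)

lemma mul_nec {μ : ℕ} {ℓ : Fin μ → ℕ} (hmono : Antitone ℓ)
    (M : Matrix ((i : Fin μ) × Fin (ℓ i)) ((i : Fin μ) × Fin (ℓ i)) ℝ)
    (p q : (i : Fin μ) × Fin (ℓ i)) :
    (M * Nec ℓ) p q =
      if h : 0 < q.1.val then
        M p ⟨⟨q.1.val - 1, lt_of_le_of_lt (Nat.sub_le _ _) q.1.isLt⟩,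
          ⟨q.2.val, lt_of_lt_of_le q.2.isLt
            (hmono (Fin.le_def.mpr (Nat.sub_le _ _)))⟩⟩
      else 0 := by
  rw [Matrix.mul_apply]
  split_ifs with h
  · rw [Finset.sum_eq_single (⟨⟨q.1.val - 1, lt_of_le_of_lt (Nat.sub_le _ _) q.1.isLt⟩,
      ⟨q.2.val, lt_of_lt_of_le q.2.isLt (hmono (Fin.le_def.mpr (Nat.sub_le _ _)))⟩⟩ :
        (i : Fin μ) × Fin (ℓ i))]
    · simp only [Nec]
      rw [if_pos ⟨show q.1.val - 1 + 1 = q.1.val by omega, trivial⟩, mul_one]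
    · intro r _ hr
      simp only [Nec]
      rw [if_neg, mul_zero]
      rintro ⟨h1', h2'⟩
      exact hr (sig_ext (show r.1.val = q.1.val - 1 by omega) h2')
    · simp
  · refine Finset.sum_eq_zero fun r _ => ?_
    simp only [Nec]
    rw [if_neg, mul_zero]
    rintro ⟨h1', -⟩
    omega

/-- The equivalence between the `i`-th block subtype and `Fin (ℓ i)`. -/
def blockEquiv {μ : ℕ} (ℓ : Fin μ → ℕ) (i : Fin μ) :
    {p : (j : Fin μ) × Fin (ℓ j) // p.1 = i} ≃ Fin (ℓ i) where
  toFun p := Fin.cast (congrArg ℓ p.2) p.1.2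
  invFun x := ⟨⟨i, x⟩, rfl⟩
  left_inv := by rintro ⟨⟨j, x⟩, rfl⟩; rfl
  right_inv x := rfl

lemma det_toSquareBlock_fst {μ : ℕ} {ℓ : Fin μ → ℕ}
    (M : Matrix ((j : Fin μ) × Fin (ℓ j)) ((j : Fin μ) × Fin (ℓ j)) ℝ) (i : Fin μ) :
    (M.toSquareBlock Sigma.fst i).det =
      (Matrix.of fun x y : Fin (ℓ i) => M ⟨i, x⟩ ⟨i, y⟩).det := by
  have key : ∀ r : {p : (j : Fin μ) × Fin (ℓ j) // p.1 = i},
      (⟨i, blockEquiv ℓ i r⟩ : (j : Fin μ) × Fin (ℓ j)) = r.val :=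
    fun r => sig_ext (congrArg Fin.val r.2).symm rfl
  rw [← Matrix.det_submatrix_equiv_self (blockEquiv ℓ i)
      (Matrix.of fun x y : Fin (ℓ i) => M ⟨i, x⟩ ⟨i, y⟩)]
  congr 1
  ext p q
  simp only [Matrix.toSquareBlock_def, Matrix.submatrix_apply, Matrix.of_apply]
  rw [key p, key q]

/-- If `N` is strictly block upper triangular with superdiagonal blocks
`N_{i,i+1} = [R_{i+1,i+1}; 0]` with `R_{i+1,i+1}` invertible, then
`R^c := N (N^(E_c))ᵀ + (I − N^(E_c)(N^(E_c))ᵀ)` is block upper triangular, invertible,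
and `R^c N^(E_c) = N`. -/
theorem stmt6 {μ : ℕ} (hμ : 2 ≤ μ) (ℓ : Fin μ → ℕ)
    (hmono : Antitone ℓ) (hpos : ∀ i, 0 < ℓ i)
    (N : Matrix ((i : Fin μ) × Fin (ℓ i)) ((i : Fin μ) × Fin (ℓ i)) ℝ)
    (Rblk : (i : Fin μ) → Matrix (Fin (ℓ i)) (Fin (ℓ i)) ℝ)
    (hRblk : ∀ i, IsUnit (Rblk i))
    (hSUT : ∀ p q, q.1 ≤ p.1 → N p q = 0)
    (hSup : ∀ p q : (i : Fin μ) × Fin (ℓ i), p.1.val + 1 = q.1.val →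
      N p q = if h : p.2.val < ℓ q.1 then Rblk q.1 ⟨p.2.val, h⟩ q.2 else 0) :
    (∀ p q, q.1 < p.1 → (N * (Nec ℓ)ᵀ + (1 - Nec ℓ * (Nec ℓ)ᵀ)) p q = 0) ∧
    IsUnit (N * (Nec ℓ)ᵀ + (1 - Nec ℓ * (Nec ℓ)ᵀ)) ∧
    (N * (Nec ℓ)ᵀ + (1 - Nec ℓ * (Nec ℓ)ᵀ)) * Nec ℓ = N := by
  set Rc := N * (Nec ℓ)ᵀ + (1 - Nec ℓ * (Nec ℓ)ᵀ) with hRc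
  have hRcApply : ∀ p q, Rc p q =
      (N * (Nec ℓ)ᵀ) p q + ((if p = q then (1:ℝ) else 0) - (Nec ℓ * (Nec ℓ)ᵀ) p q) := by
    intro p q
    simp [hRc, Matrix.add_apply, Matrix.sub_apply, Matrix.one_apply]
  -- Part 1: block upper triangular
  have part1 : ∀ p q, q.1 < p.1 → Rc p q = 0 := by
    intro p q hlt
    have hlt' : q.1.val < p.1.val := hlt
    rw [hRcApply, mul_necT, mul_necT]
    rw [if_neg (show p ≠ q by rintro rfl; exact lt_irrefl _ hlt)]
    split_ifs with h h2
    · rw [hSUT p ⟨⟨q.1.val + 1, h⟩, ⟨q.2.val, h2⟩⟩ (Fin.le_def.mpr (show q.1.val + 1 ≤ p.1.val by omega))]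
      rw [show Nec ℓ p ⟨⟨q.1.val + 1, h⟩, ⟨q.2.val, h2⟩⟩ = 0 by
        simp only [Nec]; rw [if_neg]; rintro ⟨h1', -⟩; omega]
      ring
    · ring
    · ring
  -- key products
  have hB : (N * (Nec ℓ)ᵀ) * Nec ℓ = N := by
    ext p q
    rw [mul_nec hmono]
    split_ifs with h0
    · rw [mul_necT]
      dsimp only
      have hlt : q.1.val - 1 + 1 < μ := by have := q.1.isLt; omega
      rw [dif_pos hlt]
      have h2 : q.2.val < ℓ ⟨q.1.val - 1 + 1, hlt⟩ := by
        have he : (⟨q.1.val - 1 + 1, hlt⟩ : Fin μ) = q.1 := Fin.ext (show q.1.val - 1 + 1 = q.1.val by omega)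
        rw [he]; exact q.2.isLt
      rw [dif_pos h2]
      rw [show (⟨⟨q.1.val - 1 + 1, hlt⟩, ⟨q.2.val, h2⟩⟩ : (i : Fin μ) × Fin (ℓ i)) = q from
        sig_ext (show q.1.val - 1 + 1 = q.1.val by omega) rfl]
    · exact (hSUT p q (Fin.le_def.mpr (by omega))).symm
  have hA : (Nec ℓ * (Nec ℓ)ᵀ) * Nec ℓ = Nec ℓ := by
    ext p q
    rw [mul_nec hmono]
    split_ifs with h0
    · rw [mul_necT]
      dsimp only
      have hlt : q.1.val - 1 + 1 < μ := by have := q.1.isLt; omega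
      rw [dif_pos hlt]
      have h2 : q.2.val < ℓ ⟨q.1.val - 1 + 1, hlt⟩ := by
        have he : (⟨q.1.val - 1 + 1, hlt⟩ : Fin μ) = q.1 := Fin.ext (show q.1.val - 1 + 1 = q.1.val by omega)
        rw [he]; exact q.2.isLt
      rw [dif_pos h2]
      rw [show (⟨⟨q.1.val - 1 + 1, hlt⟩, ⟨q.2.val, h2⟩⟩ : (i : Fin μ) × Fin (ℓ i)) = q from
        sig_ext (show q.1.val - 1 + 1 = q.1.val by omega) rfl]
    · simp only [Nec]
      rw [if_neg]
      rintro ⟨h1', -⟩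
      omega
  have part3 : Rc * Nec ℓ = N := by
    rw [hRc, add_mul, sub_mul, one_mul, hB, hA, sub_self, add_zero]
  -- Part 2: invertibility
  have hBT : Rc.BlockTriangular Sigma.fst := fun p q h => part1 p q h
  have part2 : IsUnit Rc := by
    rw [Matrix.isUnit_iff_isUnit_det, hBT.det_fintype, isUnit_iff_ne_zero,
      Finset.prod_ne_zero_iff]
    intro i _
    rw [det_toSquareBlock_fst Rc i]
    set A : Matrix (Fin (ℓ i)) (Fin (ℓ i)) ℝ :=
      Matrix.of fun x y : Fin (ℓ i) => Rc ⟨i, x⟩ ⟨i, y⟩ with hAdef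
    by_cases h : i.val + 1 < μ
    · have hk : ℓ (⟨i.val + 1, h⟩ : Fin μ) ≤ ℓ i :=
        hmono (Fin.le_def.mpr (Nat.le_succ _))
      have hAval : ∀ x y : Fin (ℓ i), A x y =
          (if hx : x.val < ℓ (⟨i.val + 1, h⟩ : Fin μ) then
            (if hy : y.val < ℓ (⟨i.val + 1, h⟩ : Fin μ) then
              Rblk ⟨i.val + 1, h⟩ ⟨x.val, hx⟩ ⟨y.val, hy⟩ else 0)
          else 0) + ((if x = y then (1:ℝ) else 0) -
            (if x = y ∧ y.val < ℓ (⟨i.val + 1, h⟩ : Fin μ) then 1 else 0)) := by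
        intro x y
        show Rc ⟨i, x⟩ ⟨i, y⟩ = _
        rw [hRcApply, mul_necT, mul_necT]
        dsimp only
        rw [dif_pos h, dif_pos h]
        have hδ : (if (⟨i, x⟩ : (j : Fin μ) × Fin (ℓ j)) = ⟨i, y⟩ then (1:ℝ) else 0)
            = (if x = y then (1:ℝ) else 0) := by
          by_cases hxy : x = y
          · rw [if_pos (by rw [hxy]), if_pos hxy]
          · rw [if_neg (fun he => hxy (Fin.ext (sig_snd_val he))), if_neg hxy]
        by_cases hy : y.val < ℓ (⟨i.val + 1, h⟩ : Fin μ)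
        · rw [dif_pos hy, dif_pos hy, hSup ⟨i, x⟩ ⟨⟨i.val + 1, h⟩, ⟨y.val, hy⟩⟩ rfl]
          dsimp only
          have hNec : Nec ℓ ⟨i, x⟩ ⟨⟨i.val + 1, h⟩, ⟨y.val, hy⟩⟩
              = (if x = y then (1:ℝ) else 0) := by
            simp only [Nec]
            by_cases hxy : x = y
            · rw [if_pos ⟨trivial, congrArg Fin.val hxy⟩, if_pos hxy]
            · rw [if_neg (fun hc => hxy (Fin.ext hc.2)), if_neg hxy]
          rw [hδ, hNec]
          rw [show (if x = y ∧ y.val < ℓ (⟨i.val + 1, h⟩ : Fin μ) then (1:ℝ) else 0)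
              = (if x = y then (1:ℝ) else 0) by
            by_cases hxy : x = y
            · rw [if_pos ⟨hxy, hy⟩, if_pos hxy]
            · rw [if_neg (fun hc => hxy hc.1), if_neg hxy]]
          congr 1
          by_cases hx : x.val < ℓ (⟨i.val + 1, h⟩ : Fin μ)
          · rw [dif_pos hx, dif_pos hx, dif_pos hy]
          · rw [dif_neg hx, dif_neg hx]
        · rw [dif_neg hy, dif_neg hy, hδ,
            if_neg (fun hc : x = y ∧ _ => hy hc.2)]
          by_cases hx : x.val < ℓ (⟨i.val + 1, h⟩ : Fin μ)
          · rw [dif_pos hx, dif_neg hy]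
          · rw [dif_neg hx]
      -- A is the reindexed block-diagonal matrix
      have hsum : ℓ (⟨i.val + 1, h⟩ : Fin μ) + (ℓ i - ℓ (⟨i.val + 1, h⟩ : Fin μ)) = ℓ i :=
        Nat.add_sub_cancel' hk
      set ee : Fin (ℓ (⟨i.val + 1, h⟩ : Fin μ)) ⊕
          Fin (ℓ i - ℓ (⟨i.val + 1, h⟩ : Fin μ)) ≃ Fin (ℓ i) :=
        finSumFinEquiv.trans (finCongr hsum) with hee
      have hval1 : ∀ a, (ee (Sum.inl a)).val = a.val := fun a => by simp [hee]
      have hval2 : ∀ b, (ee (Sum.inr b)).val = ℓ (⟨i.val + 1, h⟩ : Fin μ) + b.val :=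
        fun b => by simp [hee]
      set B : Matrix (Fin (ℓ (⟨i.val + 1, h⟩ : Fin μ)) ⊕
            Fin (ℓ i - ℓ (⟨i.val + 1, h⟩ : Fin μ)))
          (Fin (ℓ (⟨i.val + 1, h⟩ : Fin μ)) ⊕ Fin (ℓ i - ℓ (⟨i.val + 1, h⟩ : Fin μ))) ℝ :=
        Matrix.fromBlocks (Rblk ⟨i.val + 1, h⟩) 0 0 1 with hBdef
      have hDB : A = B.submatrix ee.symm ee.symm := by
        ext x y
        have hx := ee.apply_symm_apply x
        have hy := ee.apply_symm_apply y
        rcases hsx : ee.symm x with a | b <;> rcases hsy : ee.symm y with c | d <;>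
            rw [hsx] at hx <;> rw [hsy] at hy
        · have hxv : x.val = a.val := by rw [← hx]; exact hval1 a
          have hyv : y.val = c.val := by rw [← hy]; exact hval1 c
          rw [hAval]
          simp only [hBdef, Matrix.submatrix_apply, hsx, hsy, Matrix.fromBlocks_apply₁₁]
          rw [dif_pos (hxv ▸ a.isLt), dif_pos (hyv ▸ c.isLt)]
          rw [show (⟨x.val, hxv ▸ a.isLt⟩ : Fin (ℓ (⟨i.val + 1, h⟩ : Fin μ))) = a from
            Fin.ext hxv]
          rw [show (⟨y.val, hyv ▸ c.isLt⟩ : Fin (ℓ (⟨i.val + 1, h⟩ : Fin μ))) = c from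
            Fin.ext hyv]
          by_cases hxy : x = y
          · rw [if_pos hxy, if_pos ⟨hxy, hyv ▸ c.isLt⟩]; ring
          · rw [if_neg hxy, if_neg (fun hc => hxy hc.1)]; ring
        · have hxv : x.val = a.val := by rw [← hx]; exact hval1 a
          have hyv : y.val = ℓ (⟨i.val + 1, h⟩ : Fin μ) + d.val := by
            rw [← hy]; exact hval2 d
          have hxy : x ≠ y := by
            intro he; rw [he, hyv] at hxv; have := a.isLt; omega
          rw [hAval]
          simp only [hBdef, Matrix.submatrix_apply, hsx, hsy, Matrix.fromBlocks_apply₁₂,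
            Matrix.zero_apply]
          rw [dif_pos (hxv ▸ a.isLt), dif_neg (by omega), if_neg hxy,
            if_neg (fun hc => hxy hc.1)]
          ring
        · have hxv : x.val = ℓ (⟨i.val + 1, h⟩ : Fin μ) + b.val := by
            rw [← hx]; exact hval2 b
          have hyv : y.val = c.val := by rw [← hy]; exact hval1 c
          have hxy : x ≠ y := by
            intro he; rw [← he, hxv] at hyv; have := c.isLt; omega
          rw [hAval]
          simp only [hBdef, Matrix.submatrix_apply, hsx, hsy, Matrix.fromBlocks_apply₂₁,
            Matrix.zero_apply]
          rw [dif_neg (by omega), if_neg hxy, if_neg (fun hc => hxy hc.1)]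
          ring
        · have hxv : x.val = ℓ (⟨i.val + 1, h⟩ : Fin μ) + b.val := by
            rw [← hx]; exact hval2 b
          have hyv : y.val = ℓ (⟨i.val + 1, h⟩ : Fin μ) + d.val := by
            rw [← hy]; exact hval2 d
          rw [hAval]
          simp only [hBdef, Matrix.submatrix_apply, hsx, hsy, Matrix.fromBlocks_apply₂₂,
            Matrix.one_apply]
          rw [dif_neg (by omega), if_neg (fun hc : x = y ∧ _ => by
            have := hc.2; omega)]
          have hiff : x = y ↔ b = d :=
            ⟨fun he => Fin.ext (by have := congrArg Fin.val he; omega),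
             fun he => Fin.ext (by have := congrArg Fin.val he; omega)⟩
          by_cases hbd : b = d
          · rw [if_pos (hiff.mpr hbd), if_pos hbd]; ring
          · rw [if_neg (fun hc => hbd (hiff.mp hc)), if_neg hbd]; ring
      rw [hDB, Matrix.det_submatrix_equiv_self, hBdef, Matrix.det_fromBlocks_zero₂₁,
        Matrix.det_one, mul_one]
      exact ((Matrix.isUnit_iff_isUnit_det _).mp (hRblk _)).ne_zero
    · have hA1 : A = 1 := by
        ext x y
        show Rc ⟨i, x⟩ ⟨i, y⟩ = _
        rw [hRcApply, mul_necT, mul_necT]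
        dsimp only
        rw [dif_neg h, dif_neg h, Matrix.one_apply]
        have hδ : (if (⟨i, x⟩ : (j : Fin μ) × Fin (ℓ j)) = ⟨i, y⟩ then (1:ℝ) else 0)
            = (if x = y then (1:ℝ) else 0) := by
          by_cases hxy : x = y
          · rw [if_pos (by rw [hxy]), if_pos hxy]
          · rw [if_neg (fun he => hxy (Fin.ext (sig_snd_val he))), if_neg hxy]
        rw [hδ]
        ring
      rw [hA1, Matrix.det_one]
      exact one_ne_zero
  exact ⟨part1, part2, part3⟩
end

section
/- Uniqueness of dimensions in standard canonical form (constant case): if diag(I_d, N) X = Y diag(I_{d̃}, Ñ) and diag(Ω, I_a) X = Y diag(Ω̃, I_{ã}) for invertible matrices X, Y (with N, Ñ nilpotent strictly upper triangular and d + a = d̃ + ã = m), then d = d̃ and a = ã. -/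
/-!
The determinant of the pencil `diag(I_d, N) - s • diag(Ω, I_a)` is `det (1 - s • Ω) * (-s) ^ a`,
which vanishes to order exactly `a` at `s = 0` since `N` is nilpotent triangular. Multiplying the
pencil by the invertible `Y` and `X` scales its determinant by a nonzero constant, so the orders
of vanishing agree: `a = a'`, and then `d = d'` because `d + a = d' + a'`.
-/

open Matrix Filter Topology

lemma eq_of_mul_pow_eq_mul_pow {𝕜 : Type*} [NontriviallyNormedField 𝕜] {f g : 𝕜 → 𝕜}
    (hf : ContinuousAt f 0) (hg : ContinuousAt g 0) (hf0 : f 0 ≠ 0) (hg0 : g 0 ≠ 0) {m n : ℕ}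
    (h : ∀ s, f s * s ^ m = g s * s ^ n) : m = n := by
  wlog hmn : m < n generalizing f g m n
  · rcases (not_lt.mp hmn).eq_or_lt with heq | hlt
    · exact heq.symm
    · exact (this hg hf hg0 hf0 (fun s => (h s).symm) hlt).symm
  have hfg : ∀ s ≠ 0, f s = g s * s ^ (n - m) := fun s hs => by
    apply mul_right_cancel₀ (pow_ne_zero m hs)
    rw [h s, mul_assoc, ← pow_add, Nat.sub_add_cancel hmn.le]
  have hprod_lim : Tendsto (fun s => g s * s ^ (n - m)) (𝓝[≠] 0) (𝓝 0) := by
    simpa [zero_pow (Nat.sub_ne_zero_of_lt hmn)] using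
      ((hg.tendsto.mul (continuous_pow (n - m)).continuousAt.tendsto).mono_left nhdsWithin_le_nhds)
  have hf_lim : Tendsto f (𝓝[≠] 0) (𝓝 0) :=
    hprod_lim.congr' (eventually_nhdsWithin_of_forall fun s hs => (hfg s hs).symm)
  exact absurd (tendsto_nhds_unique (hf.tendsto.mono_left nhdsWithin_le_nhds) hf_lim) hf0

lemma det_sub_smul_one_of_strictUpperTriangular {ι R : Type*} [Fintype ι] [DecidableEq ι]
    [LinearOrder ι] [CommRing R] {M : Matrix ι ι R} (hM : ∀ i j, j ≤ i → M i j = 0) (s : R) :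
    (M - s • 1).det = (-s) ^ Fintype.card ι := by
  have htri : (M - s • 1).IsUpperTriangular := fun i j (hij : j < i) => by
    simp [hM i j hij.le, one_apply_ne hij.ne']
  rw [det_of_isUpperTriangular htri]
  simp [hM _ _ le_rfl]

lemma det_fromBlocks_one_sub_smul_fromBlocks {m n R : Type*} [Fintype m] [Fintype n]
    [DecidableEq m] [DecidableEq n] [CommRing R] (N : Matrix n n R) (Ω : Matrix m m R) (s : R) :
    (fromBlocks 1 0 0 N - s • fromBlocks Ω 0 0 1).det = (1 - s • Ω).det * (N - s • 1).det := by
  have hblocks : fromBlocks 1 0 0 N - s • fromBlocks Ω 0 0 1 =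
      fromBlocks (1 - s • Ω) 0 0 (N - s • 1) := by
    ext (i | i) (j | j) <;> simp
  rw [hblocks, det_fromBlocks_zero₂₁]

lemma det_mul_mul_eq_det_submatrix {ι κ R : Type*} [Fintype ι] [Fintype κ] [DecidableEq ι]
    [DecidableEq κ] [CommRing R] (e : κ ≃ ι) (Y : Matrix κ ι R) (M : Matrix ι ι R) (X : Matrix ι κ R) :
    (Y * M * X).det = (Y.submatrix id e).det * M.det * (X.submatrix e id).det := by
  rw [← det_submatrix_equiv_self e M, ← det_mul, ← det_mul, submatrix_mul_equiv,
    ← submatrix_id_id (Y * M), submatrix_mul_equiv]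
  simp only [submatrix_id_id]

/-- Uniqueness of dimensions in the standard canonical form (constant case). -/
theorem stmt15 (d a d' a' : ℕ) (hm : d + a = d' + a')
    (N : Matrix (Fin a) (Fin a) ℝ) (N' : Matrix (Fin a') (Fin a') ℝ)
    (Om : Matrix (Fin d) (Fin d) ℝ) (Om' : Matrix (Fin d') (Fin d') ℝ)
    (hN : ∀ i j : Fin a, j ≤ i → N i j = 0)
    (hN' : ∀ i j : Fin a', j ≤ i → N' i j = 0)
    (X : Matrix (Fin d ⊕ Fin a) (Fin d' ⊕ Fin a') ℝ)
    (Y : Matrix (Fin d' ⊕ Fin a') (Fin d ⊕ Fin a) ℝ)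
    (hX : ∃ X' : Matrix (Fin d' ⊕ Fin a') (Fin d ⊕ Fin a) ℝ, X * X' = 1 ∧ X' * X = 1)
    (hY : ∃ Y' : Matrix (Fin d ⊕ Fin a) (Fin d' ⊕ Fin a') ℝ, Y * Y' = 1 ∧ Y' * Y = 1)
    (h1 : Y * (fromBlocks 1 0 0 N : Matrix (Fin d ⊕ Fin a) (Fin d ⊕ Fin a) ℝ) * X = fromBlocks 1 0 0 N')
    (h2 : Y * (fromBlocks Om 0 0 1 : Matrix (Fin d ⊕ Fin a) (Fin d ⊕ Fin a) ℝ) * X = fromBlocks Om' 0 0 1) :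
    d = d' ∧ a = a' := by
  obtain ⟨X', hXX', -⟩ := hX
  obtain ⟨Y', hYY', -⟩ := hY
  let e : (Fin d' ⊕ Fin a') ≃ (Fin d ⊕ Fin a) := Fintype.equivOfCardEq (by simp [hm])
  have hXe : IsUnit (X.submatrix e id).det := isUnit_det_of_right_inverse (B := X'.submatrix id e)
    (by rw [← submatrix_mul _ _ _ _ _ Function.bijective_id, hXX', submatrix_one_equiv])
  have hYe : IsUnit (Y.submatrix id e).det := isUnit_det_of_right_inverse (B := Y'.submatrix e id)
    (by rw [← submatrix_mul _ _ _ _ _ e.bijective, hYY', submatrix_id_id])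
  have hpencil : ∀ s : ℝ, (Y.submatrix id e).det * (X.submatrix e id).det * (-1) ^ a *
      (1 - s • Om).det * s ^ a = (-1) ^ a' * (1 - s • Om').det * s ^ a' := fun s => by
    have hdet := det_mul_mul_eq_det_submatrix e Y (fromBlocks 1 0 0 N - s • fromBlocks Om 0 0 1) X
    rw [Matrix.mul_sub, Matrix.sub_mul, Matrix.mul_smul, Matrix.smul_mul, h1, h2] at hdet
    simp only [det_fromBlocks_one_sub_smul_fromBlocks, det_sub_smul_one_of_strictUpperTriangular hN,
      det_sub_smul_one_of_strictUpperTriangular hN', Fintype.card_fin, neg_pow s] at hdet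
    linear_combination -hdet
  have haa : a = a' := eq_of_mul_pow_eq_mul_pow (by fun_prop) (by fun_prop)
    (by simp [hYe.ne_zero, hXe.ne_zero]) (by simp) hpencil
  exact ⟨by omega, haa⟩
end
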